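/- Suppose q̄(-1) < 0 where q̄(-1) = lim_{ℓ→∞} (1/ℓ) ln ∑_{a∈A^ℓ} P_X[a]P_Y[a], with P_X shift-invariant and X, Y independent with laws P_X, P_Y. Then for every p > 0 there exists κ > 0 such that, for all sufficiently large N, the probability that some substring of Y₁…Y_N of length ⌈κ ln N⌉ occurs as a substring of X₁…X_N is at most N^{-p}. -/

import Mathlib

open MeasureTheory Filter Real

/-- The left shift on one-sided sequences. -/
def shift {A : Type*} (x : ℕ → A) : ℕ → A := fun n => x (n + 1)

/-- The cylinder set of sequences starting with the string `a`. -/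
def cyl {A : Type*} (a : List A) : Set (ℕ → A) :=
  {x | ∀ i : Fin a.length, x i = a.get i}

/-- The probability of the cylinder set `[a]`. -/
noncomputable def cylP {A : Type*} [MeasurableSpace A]
    (P : Measure (ℕ → A)) (a : List A) : ℝ := (P (cyl a)).toReal

/-- The prefix of length `n` of a sequence, as a string. -/
def pre {A : Type*} (x : ℕ → A) (n : ℕ) : List A := List.ofFn (fun i : Fin n => x i)

/-- `-ln p`, valued in `[0,∞]` with the convention `-ln 0 = ∞`. -/
noncomputable def nLog (p : ℝ) : ENNReal :=
  if p = 0 then ⊤ else ENNReal.ofReal (-Real.log p)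

lemma shift_iter_apply {A : Type*} (x : ℕ → A) : ∀ j i, (shift^[j] x) i = x (i + j)
  | 0, i => rfl
  | j+1, i => by
    rw [Function.iterate_succ_apply, shift_iter_apply (shift x) j i]
    simp only [shift, Nat.add_assoc]

lemma measure_iter_inv {A : Type*} [MeasurableSpace A] (P : Measure (ℕ → A))
    (hinv : ∀ s : Set (ℕ → A), P (shift ⁻¹' s) = P s) :
    ∀ (j : ℕ) (s : Set (ℕ → A)), P (shift^[j] ⁻¹' s) = P s
  | 0, s => rfl
  | j+1, s => by
    rw [Function.iterate_succ, Set.preimage_comp, hinv, measure_iter_inv P hinv j s]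

lemma mem_cyl_ofFn {A : Type*} {ℓ : ℕ} (a : Fin ℓ → A) (x : ℕ → A) :
    x ∈ cyl (List.ofFn a) ↔ ∀ i : Fin ℓ, x i = a i := by
  unfold cyl
  simp only [Set.mem_setOf_eq]
  constructor
  · intro h i
    have := h (Fin.cast (List.length_ofFn : (List.ofFn a).length = ℓ).symm i)
    simpa [List.get_ofFn] using this
  · intro h i
    have := h (Fin.cast (List.length_ofFn : (List.ofFn a).length = ℓ) i)
    simpa [List.get_ofFn, Fin.cast] using this

lemma shifted_cyl_measure {A : Type*} [MeasurableSpace A] (P : Measure (ℕ → A))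
    (hinv : ∀ s : Set (ℕ → A), P (shift ⁻¹' s) = P s) {ℓ : ℕ} (a : Fin ℓ → A) (j : ℕ) :
    P {x : ℕ → A | ∀ i : Fin ℓ, x (j + (i : ℕ)) = a i} = P (cyl (List.ofFn a)) := by
  have hs : {x : ℕ → A | ∀ i : Fin ℓ, x (j + (i : ℕ)) = a i}
      = shift^[j] ⁻¹' cyl (List.ofFn a) := by
    ext x
    simp only [Set.mem_setOf_eq, Set.mem_preimage, mem_cyl_ofFn, shift_iter_apply]
    constructor
    · intro h i; rw [Nat.add_comm]; exact h i
    · intro h i; rw [Nat.add_comm]; exact h i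
  rw [hs, measure_iter_inv P hinv j]

lemma event_measure_le {A : Type*} [Fintype A] [MeasurableSpace A]
    (PX PY : Measure (ℕ → A)) [IsProbabilityMeasure PX] [IsProbabilityMeasure PY]
    (hinvX : ∀ s : Set (ℕ → A), PX (shift ⁻¹' s) = PX s)
    (hinvY : ∀ s : Set (ℕ → A), PY (shift ⁻¹' s) = PY s)
    (ℓ m j : ℕ) :
    (PX.prod PY) {z : (ℕ → A) × (ℕ → A) | ∀ i < ℓ, z.1 (j + i) = z.2 (m + i)}
      ≤ ENNReal.ofReal (∑ a : Fin ℓ → A, cylP PX (List.ofFn a) * cylP PY (List.ofFn a)) := by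
  have hsub : {z : (ℕ → A) × (ℕ → A) | ∀ i < ℓ, z.1 (j + i) = z.2 (m + i)}
      ⊆ ⋃ a : Fin ℓ → A,
        ({x : ℕ → A | ∀ i : Fin ℓ, x (j + (i : ℕ)) = a i} ×ˢ
          {y : ℕ → A | ∀ i : Fin ℓ, y (m + (i : ℕ)) = a i}) := by
    intro z hz
    refine Set.mem_iUnion.2 ⟨fun i => z.2 (m + (i : ℕ)), ?_, ?_⟩
    · intro i; exact hz i i.isLt
    · intro i; rfl
  calc (PX.prod PY) {z : (ℕ → A) × (ℕ → A) | ∀ i < ℓ, z.1 (j + i) = z.2 (m + i)}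
      ≤ (PX.prod PY) (⋃ a : Fin ℓ → A,
        ({x : ℕ → A | ∀ i : Fin ℓ, x (j + (i : ℕ)) = a i} ×ˢ
          {y : ℕ → A | ∀ i : Fin ℓ, y (m + (i : ℕ)) = a i})) := measure_mono hsub
    _ ≤ ∑' a : Fin ℓ → A, (PX.prod PY)
        ({x : ℕ → A | ∀ i : Fin ℓ, x (j + (i : ℕ)) = a i} ×ˢ
          {y : ℕ → A | ∀ i : Fin ℓ, y (m + (i : ℕ)) = a i}) := measure_iUnion_le _
    _ = ∑ a : Fin ℓ → A, (PX.prod PY)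
        ({x : ℕ → A | ∀ i : Fin ℓ, x (j + (i : ℕ)) = a i} ×ˢ
          {y : ℕ → A | ∀ i : Fin ℓ, y (m + (i : ℕ)) = a i}) := tsum_fintype _
    _ = ∑ a : Fin ℓ → A, PX (cyl (List.ofFn a)) * PY (cyl (List.ofFn a)) := by
        refine Finset.sum_congr rfl fun a _ => ?_
        rw [Measure.prod_prod, shifted_cyl_measure PX hinvX a j,
          shifted_cyl_measure PY hinvY a m]
    _ = ENNReal.ofReal (∑ a : Fin ℓ → A, cylP PX (List.ofFn a) * cylP PY (List.ofFn a)) := by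
        have key : ∀ a : Fin ℓ → A, PX (cyl (List.ofFn a)) * PY (cyl (List.ofFn a))
            = ENNReal.ofReal (cylP PX (List.ofFn a) * cylP PY (List.ofFn a)) := by
          intro a
          rw [cylP, cylP, ← ENNReal.toReal_mul, ENNReal.ofReal_toReal]
          exact ENNReal.mul_ne_top (measure_ne_top _ _) (measure_ne_top _ _)
        rw [Finset.sum_congr rfl fun a _ => key a, ← ENNReal.ofReal_sum_of_nonneg]
        intro a _
        exact mul_nonneg ENNReal.toReal_nonneg ENNReal.toReal_nonneg

/-- if `q̄(-1) = lim_ℓ (1/ℓ) ln ∑_{a∈A^ℓ} P_X[a]P_Y[a] < 0`, with the laws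
shift-invariant and `X, Y` independent, then for every `p > 0` there is `κ > 0` such that,
for all large `N`, the probability that some length-`⌈κ ln N⌉` substring of `Y₁…Y_N`
occurs as a substring of `X₁…X_N` is at most `N^{-p}`. -/
theorem stmt_8 {A : Type*} [Fintype A] [MeasurableSpace A]
    (PX PY : Measure (ℕ → A)) [IsProbabilityMeasure PX] [IsProbabilityMeasure PY]
    (hinvX : ∀ s : Set (ℕ → A), PX (shift ⁻¹' s) = PX s)
    (hinvY : ∀ s : Set (ℕ → A), PY (shift ⁻¹' s) = PY s)
    (qbar : ℝ)
    (hq : Tendsto (fun ℓ : ℕ =>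
        Real.log (∑ a : Fin ℓ → A, cylP PX (List.ofFn a) * cylP PY (List.ofFn a)) / ℓ)
      atTop (nhds qbar))
    (hqneg : qbar < 0) :
    ∀ p > (0 : ℝ), ∃ κ > (0 : ℝ), ∃ N₀ : ℕ, ∀ N ≥ N₀,
      ((PX.prod PY) {z : (ℕ → A) × (ℕ → A) |
          ∃ m j : ℕ, m + ⌈κ * Real.log N⌉₊ ≤ N ∧ j + ⌈κ * Real.log N⌉₊ ≤ N ∧
            ∀ i < ⌈κ * Real.log N⌉₊, z.1 (j + i) = z.2 (m + i)}).toReal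
        ≤ (N : ℝ) ^ (-p) := by
  intro p hp
  set S : ℕ → ℝ := fun ℓ =>
    ∑ a : Fin ℓ → A, cylP PX (List.ofFn a) * cylP PY (List.ofFn a) with hS
  -- eventually S ℓ ≤ exp (ℓ * (qbar/2))
  have hhalf : qbar < qbar / 2 := by linarith
  obtain ⟨L, hL⟩ := (hq.eventually_lt_const hhalf).exists_forall_of_atTop
  have hSle : ∀ ℓ : ℕ, L ≤ ℓ → 1 ≤ ℓ → S ℓ ≤ Real.exp (ℓ * (qbar / 2)) := by
    intro ℓ hLℓ h1
    rcases le_or_gt (S ℓ) 0 with h | h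
    · exact h.trans (Real.exp_pos _).le
    · have hlt : Real.log (S ℓ) / ℓ < qbar / 2 := hL ℓ hLℓ
      have hℓpos : (0 : ℝ) < ℓ := by exact_mod_cast h1
      have : Real.log (S ℓ) < ℓ * (qbar / 2) := by
        rw [div_lt_iff₀ hℓpos] at hlt; linarith [hlt]
      calc S ℓ = Real.exp (Real.log (S ℓ)) := (Real.exp_log h).symm
        _ ≤ Real.exp (ℓ * (qbar / 2)) := Real.exp_le_exp.2 this.le
  set κ : ℝ := (p + 3) * 2 / (-qbar) with hκ
  have hκpos : 0 < κ := by
    apply div_pos (by linarith) (by linarith)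
  refine ⟨κ, hκpos, max 4 (⌈Real.exp (L / κ)⌉₊ + 1), fun N hN => ?_⟩
  have hN4 : (4 : ℕ) ≤ N := le_trans (le_max_left _ _) hN
  have hNr : (4 : ℝ) ≤ N := by exact_mod_cast hN4
  have hNpos : (0 : ℝ) < N := by linarith
  have hN1 : (1 : ℝ) ≤ N := by linarith
  have hlogN : 0 < Real.log N := Real.log_pos (by linarith)
  set ℓ : ℕ := ⌈κ * Real.log N⌉₊ with hℓ
  have hℓge : κ * Real.log N ≤ (ℓ : ℝ) := Nat.le_ceil _
  have hℓ1 : 1 ≤ ℓ := Nat.one_le_iff_ne_zero.2 (by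
    have : 0 < κ * Real.log N := mul_pos hκpos hlogN
    exact Nat.ceil_pos.2 this |>.ne')
  -- ℓ ≥ L
  have hNexp : Real.exp (L / κ) ≤ (N : ℝ) := by
    have : (⌈Real.exp (L / κ)⌉₊ + 1 : ℕ) ≤ N := le_trans (le_max_right _ _) hN
    calc Real.exp (L / κ) ≤ (⌈Real.exp (L / κ)⌉₊ : ℝ) := Nat.le_ceil _
      _ ≤ (N : ℝ) := by exact_mod_cast Nat.le_of_succ_le this
  have hlogL : (L : ℝ) / κ ≤ Real.log N := by
    rw [← Real.log_exp ((L : ℝ) / κ)]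
    exact Real.log_le_log (Real.exp_pos _) hNexp
  have hLℓ : (L : ℝ) ≤ (ℓ : ℝ) := by
    calc (L : ℝ) = κ * ((L : ℝ) / κ) := by field_simp
      _ ≤ κ * Real.log N := by
          exact mul_le_mul_of_nonneg_left hlogL hκpos.le
      _ ≤ (ℓ : ℝ) := hℓge
  have hLℓn : L ≤ ℓ := by exact_mod_cast hLℓ
  -- S ℓ ≤ N ^ (-(p+3))
  have hSN : S ℓ ≤ (N : ℝ) ^ (-(p + 3)) := by
    have h1 : S ℓ ≤ Real.exp (ℓ * (qbar / 2)) := hSle ℓ hLℓn hℓ1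
    have h2 : (ℓ : ℝ) * (qbar / 2) ≤ (κ * Real.log N) * (qbar / 2) := by
      apply mul_le_mul_of_nonpos_right hℓge (by linarith)
    have hκq : κ * (qbar / 2) = -(p + 3) := by
      rw [hκ, div_mul_eq_mul_div, div_eq_iff (by linarith : -qbar ≠ 0)]; ring
    have h3 : (κ * Real.log N) * (qbar / 2) = Real.log N * (-(p + 3)) := by
      rw [mul_comm κ (Real.log N), mul_assoc, hκq]
    rw [Real.rpow_def_of_pos hNpos]
    refine h1.trans (Real.exp_le_exp.2 ?_)
    rw [← h3]; exact h2
  -- union bound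
  set E : Set ((ℕ → A) × (ℕ → A)) := {z : (ℕ → A) × (ℕ → A) |
      ∃ m j : ℕ, m + ℓ ≤ N ∧ j + ℓ ≤ N ∧
        ∀ i < ℓ, z.1 (j + i) = z.2 (m + i)} with hE
  have hsub : E ⊆ ⋃ m ∈ Finset.range N, ⋃ j ∈ Finset.range N,
      {z : (ℕ → A) × (ℕ → A) | ∀ i < ℓ, z.1 (j + i) = z.2 (m + i)} := by
    rintro z ⟨m, j, hm, hj, hz⟩
    have hmN : m < N := by omega
    have hjN : j < N := by omega
    simp only [Set.mem_iUnion, Finset.mem_range]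
    exact ⟨m, hmN, j, hjN, hz⟩
  have hmeas : (PX.prod PY) E ≤ ENNReal.ofReal ((N : ℝ) * ((N : ℝ) * S ℓ)) := by
    calc (PX.prod PY) E ≤ ∑ m ∈ Finset.range N, ∑ j ∈ Finset.range N,
        (PX.prod PY) {z : (ℕ → A) × (ℕ → A) | ∀ i < ℓ, z.1 (j + i) = z.2 (m + i)} := by
          refine (measure_mono hsub).trans ?_
          refine (measure_biUnion_finset_le _ _).trans ?_
          exact Finset.sum_le_sum fun m _ => measure_biUnion_finset_le _ _
      _ ≤ ∑ m ∈ Finset.range N, ∑ j ∈ Finset.range N, ENNReal.ofReal (S ℓ) := by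
          refine Finset.sum_le_sum fun m _ => Finset.sum_le_sum fun j _ => ?_
          exact event_measure_le PX PY hinvX hinvY ℓ m j
      _ = (N : ENNReal) * ((N : ENNReal) * ENNReal.ofReal (S ℓ)) := by
          simp [Finset.sum_const, mul_assoc]
      _ = ENNReal.ofReal ((N : ℝ) * ((N : ℝ) * S ℓ)) := by
          rw [ENNReal.ofReal_mul (by positivity), ENNReal.ofReal_mul (by positivity)]
          simp [ENNReal.ofReal_natCast]
  have hSnonneg : 0 ≤ S ℓ := Finset.sum_nonneg fun a _ =>
    mul_nonneg ENNReal.toReal_nonneg ENNReal.toReal_nonneg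
  -- final real estimate
  have hreal : (N : ℝ) * ((N : ℝ) * S ℓ) ≤ (N : ℝ) ^ (-p) := by
    have h1 : (N : ℝ) * ((N : ℝ) * S ℓ) ≤ (N : ℝ) * ((N : ℝ) * (N : ℝ) ^ (-(p + 3))) := by
      have := mul_le_mul_of_nonneg_left hSN hNpos.le
      exact mul_le_mul_of_nonneg_left this hNpos.le
    refine h1.trans ?_
    have h2 : (N : ℝ) * ((N : ℝ) * (N : ℝ) ^ (-(p + 3)))
        = (N : ℝ) ^ ((2 : ℝ) + -(p + 3)) := by
      rw [Real.rpow_add hNpos]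
      rw [show ((2 : ℝ)) = ((2 : ℕ) : ℝ) by norm_num, Real.rpow_natCast]
      ring
    rw [h2]
    exact Real.rpow_le_rpow_of_exponent_le hN1 (by linarith)
  exact ENNReal.toReal_le_of_le_ofReal (Real.rpow_nonneg hNpos.le _)
    (hmeas.trans (ENNReal.ofReal_le_ofReal hreal))
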